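/- arXiv:0806.1261 — 2 statements merged into one kernel-verified Lean document; each statement's English description precedes it below -/
import Mathlib

section
/- Let V be a finite-dimensional real vector space, D ⊆ V ⊕ V* a Lagrangian subspace for the pairing ⟨(u,α),(v,β)⟩ = β(u) + α(v), and let G₁ = {v ∈ V : ∃α, (v,α) ∈ D}, G₀ = {v ∈ V : (v,0) ∈ D}. Then there exists a skew-symmetric bilinear form ω on G₁ such that D = {(v,α) : v ∈ G₁ and α|_{G₁} = ω(v,·)}, and the kernel of ω (as a form on G₁) equals G₀. -/
open Module

/-- The canonical symmetric pairing on `V ⊕ V*`: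
`⟨(u,α),(v,β)⟩ = β(u) + α(v)`. -/
noncomputable def pairingForm (V : Type*) [AddCommGroup V] [Module ℝ V] :
    LinearMap.BilinForm ℝ (V × Module.Dual ℝ V) :=
  LinearMap.mk₂ ℝ (fun p q => q.2 p.1 + p.2 q.1)
    (fun p p' q => by
      simp only [Prod.fst_add, Prod.snd_add, map_add, LinearMap.add_apply]; ring)
    (fun c p q => by
      simp only [Prod.smul_fst, Prod.smul_snd, map_smul, LinearMap.smul_apply,
        smul_eq_mul]; ring)
    (fun p q q' => by
      simp only [Prod.fst_add, Prod.snd_add, map_add, LinearMap.add_apply]; ring)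
    (fun p c q => by
      simp only [Prod.smul_fst, Prod.smul_snd, map_smul, LinearMap.smul_apply,
        smul_eq_mul]; ring)

/-!
Isotropy of `D` says that for `(0, α) ∈ D` the form `α` vanishes on `G₁`, so the restriction
`α|_{G₁}` of `(v, α) ∈ D` depends only on `v`; this defines `ω(v, ·)`, and isotropy again
makes `ω` skew. Coisotropy (`D^⊥ ⊆ D`) puts every `(0, γ)` with `γ|_{G₁} = 0` into `D`, so `D`
is the whole graph of `ω`. The kernel statement is the graph statement at `α = 0`.
-/

open LinearMap

theorem Submodule.mem_map_fst_iff {R M N : Type*} [Semiring R] [AddCommMonoid M] [Module R M]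
    [AddCommMonoid N] [Module R N] (D : Submodule R (M × N)) (v : M) :
    v ∈ D.map (LinearMap.fst R M N) ↔ ∃ n, (v, n) ∈ D := by
  simp [Submodule.mem_map]

theorem exists_rightInverse_submoduleMap_fst {K V W : Type*} [Field K] [AddCommGroup V]
    [Module K V] [AddCommGroup W] [Module K W] (D : Submodule K (V × W)) :
    ∃ s : D.map (fst K V W) →ₗ[K] D, (fst K V W).submoduleMap D ∘ₗ s = LinearMap.id :=
  LinearMap.exists_rightInverse_of_surjective _ (range_eq_top.mpr (submoduleMap_surjective _ _))

section GraphForm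

variable {K V : Type*} [Field K] [AddCommGroup V] [Module K V]
  (D : Submodule K (V × Dual K V))

noncomputable def graphForm : LinearMap.BilinForm K (D.map (fst K V (Dual K V))) :=
  (D.map (fst K V (Dual K V))).dualRestrict ∘ₗ snd K V (Dual K V) ∘ₗ D.subtype ∘ₗ
    (exists_rightInverse_submoduleMap_fst D).choose

variable {D} (hiso : ∀ p ∈ D, ∀ q ∈ D, q.2 p.1 + p.2 q.1 = 0)
include hiso

theorem eq_on_map_fst_of_mem {v : V} {α β : Dual K V} (hα : (v, α) ∈ D) (hβ : (v, β) ∈ D)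
    (w : D.map (fst K V (Dual K V))) : α w = β w := by
  obtain ⟨γ, hγ⟩ := (D.mem_map_fst_iff _).mp w.2
  have hαγ := hiso _ hγ _ hα
  have hβγ := hiso _ hγ _ hβ
  simp only at hαγ hβγ
  linear_combination hαγ - hβγ

theorem graphForm_apply {v : V} {α : Dual K V} (h : (v, α) ∈ D)
    (w : D.map (fst K V (Dual K V))) :
    graphForm D ⟨v, Submodule.mem_map_of_mem h⟩ w = α w := by
  set d := (exists_rightInverse_submoduleMap_fst D).choose ⟨v, Submodule.mem_map_of_mem h⟩
  have hd : (d : V × Dual K V).1 = v :=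
    congrArg Subtype.val <|
      LinearMap.congr_fun (exists_rightInverse_submoduleMap_fst D).choose_spec _
  have hmem : (v, (d : V × Dual K V).2) ∈ D := hd ▸ d.2
  exact eq_on_map_fst_of_mem hiso hmem h w

theorem graphForm_skew (x y : D.map (fst K V (Dual K V))) :
    graphForm D x y = -graphForm D y x := by
  obtain ⟨α, hxα⟩ := (D.mem_map_fst_iff _).mp x.2
  obtain ⟨β, hyβ⟩ := (D.mem_map_fst_iff _).mp y.2
  rw [← Subtype.coe_eta x x.2, ← Subtype.coe_eta y y.2, graphForm_apply hiso hxα,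
    graphForm_apply hiso hyβ, eq_neg_iff_add_eq_zero]
  exact hiso _ hyβ _ hxα

theorem mem_iff_graphForm
    (hcoiso : ∀ γ : Dual K V, (∀ p ∈ D, γ p.1 = 0) → ((0 : V), γ) ∈ D)
    (v : V) (α : Dual K V) :
    (v, α) ∈ D ↔ ∃ hv : v ∈ D.map (fst K V (Dual K V)),
      ∀ w : D.map (fst K V (Dual K V)), α w = graphForm D ⟨v, hv⟩ w := by
  refine ⟨fun h => ⟨Submodule.mem_map_of_mem h, fun w => (graphForm_apply hiso h w).symm⟩,
    ?_⟩
  rintro ⟨hv, hα⟩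
  obtain ⟨α₀, hα₀⟩ := (D.mem_map_fst_iff v).mp hv
  have hdiff : ((0 : V), α - α₀) ∈ D := hcoiso _ fun p hp => by
    have := hα ⟨p.1, Submodule.mem_map_of_mem hp⟩
    rw [graphForm_apply hiso hα₀] at this
    simp [this]
  simpa using D.add_mem hα₀ hdiff

end GraphForm

section Lagrangian

variable {V : Type*} [AddCommGroup V] [Module ℝ V] {D : Submodule ℝ (V × Dual ℝ V)}

theorem pairingForm_apply (p q : V × Dual ℝ V) : pairingForm V p q = q.2 p.1 + p.2 q.1 := rfl

theorem pairingForm_isotropic (hD : D ≤ (pairingForm V).orthogonal D) :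
    ∀ p ∈ D, ∀ q ∈ D, q.2 p.1 + p.2 q.1 = 0 :=
  fun p hp _ hq => hD hq p hp

theorem zero_prod_mem_of_orthogonal_le (hD : (pairingForm V).orthogonal D ≤ D)
    (γ : Dual ℝ V) (hγ : ∀ p ∈ D, γ p.1 = 0) : ((0 : V), γ) ∈ D :=
  hD fun p hp => by simpa [pairingForm_apply] using hγ p hp

end Lagrangian

theorem lagrangian_is_graph_on_G1_general
    (V : Type*) [AddCommGroup V] [Module ℝ V]
    (D : Submodule ℝ (V × Module.Dual ℝ V))
    (hD : D = (pairingForm V).orthogonal D)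
    (G₁ : Submodule ℝ V)
    (hG₁ : (G₁ : Set V) = {v : V | ∃ α : Module.Dual ℝ V, (v, α) ∈ D}) :
    ∃ ω : LinearMap.BilinForm ℝ G₁,
      (∀ x y : G₁, ω x y = -(ω y x)) ∧
      (∀ (v : V) (α : Module.Dual ℝ V),
        (v, α) ∈ D ↔ ∃ hv : v ∈ G₁, ∀ w : G₁, α (w : V) = ω ⟨v, hv⟩ w) ∧
      (∀ x : G₁, (∀ y : G₁, ω x y = 0) ↔
        ((x : V), (0 : Module.Dual ℝ V)) ∈ D) := by
  obtain rfl : G₁ = D.map (fst ℝ V (Dual ℝ V)) :=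
    SetLike.ext fun v => (Set.ext_iff.mp hG₁ v).trans (D.mem_map_fst_iff v).symm
  have hiso := pairingForm_isotropic hD.le
  have hgraph := mem_iff_graphForm hiso (zero_prod_mem_of_orthogonal_le hD.ge)
  refine ⟨graphForm D, graphForm_skew hiso, hgraph, fun x => ?_⟩
  rw [hgraph]
  exact ⟨fun h => ⟨x.2, fun y => (h y).symm⟩, fun ⟨_, h⟩ y => (h y).symm⟩

/-- a Lagrangian subspace `D ⊆ V ⊕ V*` is determined by a
skew-symmetric bilinear form `ω` on `G₁ = pr₁(D)`:
`D = {(v,α) | v ∈ G₁, α|_{G₁} = ω(v,·)}`, and the kernel of `ω` on `G₁`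
is exactly `G₀ = {v | (v,0) ∈ D}`. -/
theorem lagrangian_is_graph_on_G1
    (V : Type*) [AddCommGroup V] [Module ℝ V] [FiniteDimensional ℝ V]
    (D : Submodule ℝ (V × Module.Dual ℝ V))
    (hD : D = (pairingForm V).orthogonal D)
    (G₁ : Submodule ℝ V)
    (hG₁ : (G₁ : Set V) = {v : V | ∃ α : Module.Dual ℝ V, (v, α) ∈ D}) :
    ∃ ω : LinearMap.BilinForm ℝ G₁,
      (∀ x y : G₁, ω x y = -(ω y x)) ∧
      (∀ (v : V) (α : Module.Dual ℝ V),
        (v, α) ∈ D ↔ ∃ hv : v ∈ G₁, ∀ w : G₁, α (w : V) = ω ⟨v, hv⟩ w) ∧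
      (∀ x : G₁, (∀ y : G₁, ω x y = 0) ↔
        ((x : V), (0 : Module.Dual ℝ V)) ∈ D) :=
  lagrangian_is_graph_on_G1_general V D hD G₁ hG₁
end

section
/- Let (V, ω) be a finite-dimensional vector space with skew-symmetric bilinear form ω, H ⊆ V a subspace on which ω restricts to a nondegenerate form, and W ⊆ V another subspace. Set U = H ∩ (H ∩ W)^{ω}, where (H ∩ W)^{ω} denotes the ω-orthogonal complement in V. Then the restriction of ω to U has kernel (on U) equal to (H ∩ W) ∩ (H ∩ W)^{ω_H}, where ω_H is the restriction of ω to H; moreover if additionally ω restricted to H ∩ W is nondegenerate, then ω restricted to U is nondegenerate. -/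
/-!
Inside `H`, where `ω` is nondegenerate, `U = H ∩ (H ∩ W)^ω` is the `ω_H`-orthogonal of
`S = H ∩ W`, so by the double-orthogonal theorem in `H` we get `H ∩ U^ω = S`. Hence the kernel
`U ∩ U^ω` is `S ∩ U`, which is contained in the kernel `S ∩ S^ω` of `ω` on `S`.
-/

open LinearMap (BilinForm)

namespace LinearMap
namespace BilinForm

variable {K V : Type*} [Field K] [AddCommGroup V] [Module K V] {B : BilinForm K V}

/-- The kernel of `B` restricted to `U`. -/
def radical (B : BilinForm K V) (U : Submodule K V) : Submodule K V :=
  U ⊓ B.orthogonal U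

theorem radical_eq_bot_iff (hB : B.IsRefl) {U : Submodule K V} :
    B.radical U = ⊥ ↔ ∀ v ∈ U, (∀ w ∈ U, B v w = 0) → v = 0 := by
  simp only [radical, Submodule.eq_bot_iff, Submodule.mem_inf, mem_orthogonal_iff]
  exact ⟨fun h v hv hvU => h v ⟨hv, fun w hw => hB v w (hvU w hw)⟩,
    fun h v ⟨hv, hvU⟩ => h v hv fun w hw => hB w v (hvU w hw)⟩

theorem IsRefl.restrict (hB : B.IsRefl) (H : Submodule K V) : (B.restrict H).IsRefl :=
  fun x y => hB x y

theorem orthogonal_restrict {H : Submodule K V} (N : Submodule K H) :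
    (B.restrict H).orthogonal N = (B.orthogonal (N.map H.subtype)).comap H.subtype := by
  ext x
  simp [mem_orthogonal_iff]

theorem inf_orthogonal_inf_orthogonal_of_le (hB : B.IsRefl) {H S : Submodule K V}
    [FiniteDimensional K H] (hH : B.radical H = ⊥) (hSH : S ≤ H) :
    H ⊓ B.orthogonal (H ⊓ B.orthogonal S) = S := by
  have hnd : (B.restrict H).Nondegenerate :=
    B.nondegenerate_restrict_of_disjoint_orthogonal hB (disjoint_iff.mpr hH)
  have h := orthogonal_orthogonal hnd (hB.restrict H) (S.comap H.subtype)
  simp only [orthogonal_restrict, Submodule.map_comap_subtype, inf_eq_right.mpr hSH] at h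
  simpa only [Submodule.map_comap_subtype, inf_eq_right.mpr hSH] using
    congrArg (Submodule.map H.subtype) h

theorem radical_inf_orthogonal (hB : B.IsRefl) {H S : Submodule K V}
    [FiniteDimensional K H] (hH : B.radical H = ⊥) (hSH : S ≤ H) :
    B.radical (H ⊓ B.orthogonal S) = S ⊓ (H ⊓ B.orthogonal S) := by
  apply le_antisymm
  · refine le_inf ?_ inf_le_left
    calc B.radical (H ⊓ B.orthogonal S)
        ≤ H ⊓ B.orthogonal (H ⊓ B.orthogonal S) := inf_le_inf_right _ inf_le_left
      _ = S := inf_orthogonal_inf_orthogonal_of_le hB hH hSH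
  · refine le_inf inf_le_right ?_
    calc S ⊓ (H ⊓ B.orthogonal S) ≤ B.orthogonal (B.orthogonal S) :=
          inf_le_left.trans (le_orthogonal_orthogonal hB)
      _ ≤ B.orthogonal (H ⊓ B.orthogonal S) := orthogonal_le inf_le_right

theorem radical_inf_orthogonal_eq_bot (hB : B.IsRefl) {H S : Submodule K V}
    [FiniteDimensional K H] (hH : B.radical H = ⊥) (hSH : S ≤ H) (hS : B.radical S = ⊥) :
    B.radical (H ⊓ B.orthogonal S) = ⊥ := by
  rw [radical_inf_orthogonal hB hH hSH, eq_bot_iff, ← hS]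
  exact inf_le_inf_left S inf_le_right

end BilinForm
end LinearMap

/-- let `(V,ω)` be a finite-dimensional space with a
skew-symmetric bilinear form, `H ⊆ V` a subspace on which `ω` is
nondegenerate, and `W ⊆ V` another subspace.  With
`U = H ∩ (H ∩ W)^ω`, the kernel of `ω` restricted to `U` equals
`(H ∩ W) ∩ (H ∩ W)^{ω_H}` (the latter orthogonal taken inside `H`);
and if moreover `ω` is nondegenerate on `H ∩ W` then `ω` is nondegenerate
on `U`. -/
theorem horizontal_annihilator_kernel
    (V : Type*) [AddCommGroup V] [Module ℝ V] [FiniteDimensional ℝ V]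
    (ω : LinearMap.BilinForm ℝ V) (hskew : ∀ v w : V, ω v w = -(ω w v))
    (H W : Submodule ℝ V)
    (hH : ∀ h ∈ H, (∀ h' ∈ H, ω h h' = 0) → h = 0) :
    ((H ⊓ ω.orthogonal (H ⊓ W)) ⊓ ω.orthogonal (H ⊓ ω.orthogonal (H ⊓ W))
        = (H ⊓ W) ⊓ (H ⊓ ω.orthogonal (H ⊓ W))) ∧
    ((∀ v ∈ H ⊓ W, (∀ w ∈ H ⊓ W, ω v w = 0) → v = 0) →
      ∀ v ∈ H ⊓ ω.orthogonal (H ⊓ W),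
        (∀ w ∈ H ⊓ ω.orthogonal (H ⊓ W), ω v w = 0) → v = 0) := by
  have hrefl : ω.IsRefl := fun v w h => by rw [hskew, h, neg_zero]
  have hH' : ω.radical H = ⊥ := (LinearMap.BilinForm.radical_eq_bot_iff hrefl).mpr hH
  refine ⟨LinearMap.BilinForm.radical_inf_orthogonal hrefl hH' inf_le_left, fun hHW => ?_⟩
  exact (LinearMap.BilinForm.radical_eq_bot_iff hrefl).mp <|
    LinearMap.BilinForm.radical_inf_orthogonal_eq_bot hrefl hH' inf_le_left
      ((LinearMap.BilinForm.radical_eq_bot_iff hrefl).mpr hHW)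
end
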